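/- arXiv:quant-ph/0211029 — 5 statements merged into one kernel-verified Lean document; each statement's English description precedes it below -/
import Mathlib

section
/- Let p be a multilinear real polynomial in the 2mn variables such that p(x) ≠ 0 for all x ∈ X_1 and p(x) = 0 for all x ∈ X_0. Then the degree of p is at least min(n/2, m/2) + 1. -/
open MvPolynomial Finset

/-- Interpret a Boolean as the real number 0 or 1. -/
def b2r (b : Bool) : ℝ := if b then 1 else 0

/-- A multilinear polynomial: every variable occurs with degree at most 1
in every monomial. -/
def IsMultilinear {σ : Type*} (p : MvPolynomial σ ℝ) : Prop :=
  ∀ s ∈ p.support, ∀ v, s v ≤ 1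

/-- Hamming weight of an `m`-bit string. -/
def weight {m : ℕ} (y : Fin m → Bool) : ℕ :=
  (Finset.univ.filter (fun j => y j = true)).card

/-- A block `z` (two `m`-bit halves, `z false` the first half and `z true`
the second half) lies in `A_b`: the half `z (!b)` is identically zero and
the half `z b` has Hamming weight at least `m / 2`. -/
def memA (m : ℕ) (b : Bool) (z : Bool → Fin m → Bool) : Prop :=
  (∀ j, z (!b) j = false) ∧ m / 2 ≤ weight (z b)

/-- `X_1`: all `n` blocks lie in `A_0`. -/
def memX1 (m n : ℕ) (x : Fin n → Bool → Fin m → Bool) : Prop :=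
  ∀ i, memA m false (x i)

/-- `X_0`: there is `y ∈ {0,1}^n` of Hamming weight `n / 2` such that
block `i` lies in `A_{y_i}` for every `i`. -/
def memX0 (m n : ℕ) (x : Fin n → Bool → Fin m → Bool) : Prop :=
  ∃ y : Fin n → Bool, weight y = n / 2 ∧ ∀ i, memA m (y i) (x i)

/-- Evaluation of a real polynomial in the `2mn` variables at a Boolean input. -/
noncomputable def evalB {m n : ℕ} (x : Fin n → Bool → Fin m → Bool)
    (p : MvPolynomial (Fin n × Bool × Fin m) ℝ) : ℝ :=
  MvPolynomial.eval (fun v => b2r (x v.1 v.2.1 v.2.2)) p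


namespace Stmt0Aux

variable {α : Type*} [DecidableEq α]

/-- The 0/1 exponent vector with support `S`. -/
def indF (S : Finset α) : α →₀ ℕ :=
  ⟨S, fun v => if v ∈ S then 1 else 0, by intro v; by_cases h : v ∈ S <;> simp [h]⟩

@[simp] lemma indF_apply (S : Finset α) (v : α) : indF S v = if v ∈ S then 1 else 0 := rfl

@[simp] lemma indF_support (S : Finset α) : (indF S).support = S := rfl

lemma indF_sum (S : Finset α) : ((indF S).sum fun _ e => e) = S.card := by
  unfold Finsupp.sum
  rw [indF_support]
  calc ∑ v ∈ S, indF S v = ∑ v ∈ S, 1 := by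
        apply Finset.sum_congr rfl; intro v hv; simp [hv]
    _ = S.card := by simp

lemma eq_indF {p : MvPolynomial α ℝ} (hp : IsMultilinear p)
    {d : α →₀ ℕ} (hd : d ∈ p.support) : d = indF d.support := by
  ext v
  by_cases h : v ∈ d.support
  · have h1 := hp d hd v
    have h2 : d v ≠ 0 := Finsupp.mem_support_iff.mp h
    simp only [indF_apply, h, if_true]
    omega
  · have h0 : d v = 0 := Finsupp.notMem_support_iff.mp h
    simp [indF_apply, h, h0]

/-- Coefficient of the multilinear monomial with support `S`. -/
noncomputable def cf (p : MvPolynomial α ℝ) (S : Finset α) : ℝ := p.coeff (indF S)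

lemma cf_eq_zero_of_big {p : MvPolynomial α ℝ} {S : Finset α}
    (h : p.totalDegree < S.card) : cf p S = 0 := by
  by_contra hc
  have hmem : indF S ∈ p.support := by
    rw [MvPolynomial.mem_support_iff]; exact hc
  have := MvPolynomial.le_totalDegree hmem
  rw [indF_sum] at this
  omega

/-- Evaluation of a multilinear polynomial at a 0/1 point. -/
lemma eval_boolean [Fintype α] {p : MvPolynomial α ℝ} (hp : IsMultilinear p)
    (X : α → Bool) :
    MvPolynomial.eval (fun v => b2r (X v)) p
      = ∑ S ∈ (univ.filter fun v => X v = true).powerset, cf p S := by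
  classical
  rw [MvPolynomial.eval_eq]
  set A : Finset α := univ.filter fun v => X v = true with hA
  have hterm : ∀ d ∈ p.support,
      (p.coeff d * ∏ v ∈ d.support, (b2r (X v)) ^ d v)
        = if d.support ⊆ A then cf p d.support else 0 := by
    intro d hd
    have hd1 : d = indF d.support := eq_indF hp hd
    have hprod : (∏ v ∈ d.support, (b2r (X v)) ^ d v)
        = if d.support ⊆ A then (1:ℝ) else 0 := by
      have hc : ∀ v ∈ d.support, (b2r (X v)) ^ d v = if X v = true then (1:ℝ) else 0 := by
        intro v hv
        have h1 : d v = 1 := by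
          have := hp d hd v
          have h2 : d v ≠ 0 := Finsupp.mem_support_iff.mp hv
          omega
        rw [h1, pow_one]
        unfold b2r
        by_cases h : X v <;> simp [h]
      have hiff : (∀ v ∈ d.support, X v = true) ↔ d.support ⊆ A := by
        constructor
        · intro hall v hv
          rw [hA, Finset.mem_filter]
          exact ⟨Finset.mem_univ v, hall v hv⟩
        · intro h v hv
          have h2 := h hv
          rw [hA, Finset.mem_filter] at h2
          exact h2.2
      rw [Finset.prod_congr rfl hc, Finset.prod_boole]
      simp only [hiff]
    rw [hprod]
    by_cases h : d.support ⊆ A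
    · simp only [h, if_true, mul_one]
      unfold cf; rw [← hd1]
    · simp [h]
  rw [Finset.sum_congr rfl hterm]
  rw [← Finset.sum_filter]
  rw [← Finset.sum_filter_of_ne (s := A.powerset) (f := fun S => cf p S)
      (p := fun S => indF S ∈ p.support) (by
        intro S hS hne
        rw [MvPolynomial.mem_support_iff]
        exact hne)]
  refine Finset.sum_bij' (i := fun d _ => d.support) (j := fun S _ => indF S)
    ?_ ?_ ?_ ?_ ?_
  · intro d hd
    simp only [Finset.mem_filter, Finset.mem_powerset] at hd ⊢
    refine ⟨hd.2, ?_⟩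
    rw [← eq_indF hp hd.1]
    exact hd.1
  · intro S hS
    simp only [Finset.mem_filter, Finset.mem_powerset, indF_support] at hS ⊢
    tauto
  · intro d hd
    simp only [Finset.mem_filter] at hd
    exact (eq_indF hp hd.1).symm
  · intro S hS
    simp
  · intro d hd
    rfl

lemma sum_powerset_neg_one_pow_card_real {s : Finset α} :
    ∑ T ∈ s.powerset, (-1:ℝ) ^ T.card = if s = ∅ then 1 else 0 := by
  have h := Finset.sum_powerset_neg_one_pow_card (x := s)
  have h2 := congrArg (fun z : ℤ => (z : ℝ)) h
  push_cast at h2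
  rw [h2]

lemma altsum (A S : Finset α) (hAS : A ⊆ S) :
    ∑ T ∈ S.powerset.filter (fun T => A ⊆ T), (-1:ℝ) ^ ((S \ T).card)
      = if A = S then 1 else 0 := by
  classical
  have h1 : ∑ T ∈ S.powerset.filter (fun T => A ⊆ T), (-1:ℝ) ^ ((S \ T).card)
      = ∑ T' ∈ (S \ A).powerset, (-1:ℝ) ^ (((S \ A) \ T').card) := by
    refine Finset.sum_bij' (i := fun T _ => T \ A) (j := fun T' _ => A ∪ T')
      ?_ ?_ ?_ ?_ ?_
    · intro T hT
      simp only [Finset.mem_filter, Finset.mem_powerset] at hT ⊢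
      exact Finset.sdiff_subset_sdiff hT.1 (le_refl _)
    · intro T' hT'
      simp only [Finset.mem_powerset] at hT'
      simp only [Finset.mem_filter, Finset.mem_powerset]
      exact ⟨Finset.union_subset hAS (hT'.trans Finset.sdiff_subset), Finset.subset_union_left⟩
    · intro T hT
      simp only [Finset.mem_filter, Finset.mem_powerset] at hT
      exact Finset.union_sdiff_of_subset hT.2
    · intro T' hT'
      simp only [Finset.mem_powerset] at hT'
      refine Finset.union_sdiff_cancel_left ?_
      exact Finset.disjoint_left.mpr (fun x hx hxT => (Finset.mem_sdiff.mp (hT' hxT)).2 hx)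
    · intro T hT
      simp only [Finset.mem_filter, Finset.mem_powerset] at hT
      congr 2
      ext x
      simp only [Finset.mem_sdiff]
      tauto
  rw [h1]
  have h2 : ∑ T' ∈ (S \ A).powerset, (-1:ℝ) ^ (((S \ A) \ T').card)
      = ∑ T'' ∈ (S \ A).powerset, (-1:ℝ) ^ (T''.card) := by
    refine Finset.sum_bij' (i := fun T' _ => (S \ A) \ T') (j := fun T'' _ => (S \ A) \ T'')
      ?_ ?_ ?_ ?_ ?_
    · intro T' _; exact Finset.mem_powerset.mpr Finset.sdiff_subset
    · intro T'' _; exact Finset.mem_powerset.mpr Finset.sdiff_subset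
    · intro T' hT'; exact Finset.sdiff_sdiff_eq_self (Finset.mem_powerset.mp hT')
    · intro T'' hT''; exact Finset.sdiff_sdiff_eq_self (Finset.mem_powerset.mp hT'')
    · intro T' _; rfl
  rw [h2, sum_powerset_neg_one_pow_card_real]
  by_cases hc : A = S
  · simp [hc]
  · have hne : S \ A ≠ ∅ := by
      intro h
      exact hc (Finset.Subset.antisymm hAS (Finset.sdiff_eq_empty_iff_subset.mp h))
    simp [hc, hne]

lemma moebius (c : Finset α → ℝ) (S R : Finset α) (hd : Disjoint S R) :
    ∑ T ∈ S.powerset, (-1:ℝ) ^ ((S \ T).card) * (∑ S' ∈ (T ∪ R).powerset, c S')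
      = ∑ U ∈ R.powerset, c (S ∪ U) := by
  classical
  have hinner : ∀ T ∈ S.powerset,
      (∑ S' ∈ (T ∪ R).powerset, c S')
        = ∑ S' ∈ (S ∪ R).powerset, if S' \ R ⊆ T then c S' else 0 := by
    intro T hT
    rw [Finset.mem_powerset] at hT
    rw [Finset.sum_ite, Finset.sum_const_zero, add_zero]
    apply Finset.sum_congr _ (fun _ _ => rfl)
    ext S'
    simp only [Finset.mem_filter, Finset.mem_powerset]
    constructor
    · intro h
      have h2 : S' \ R ⊆ T := by
        intro x hx
        rcases Finset.mem_sdiff.mp hx with ⟨hx1, hx2⟩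
        rcases Finset.mem_union.mp (h hx1) with h3 | h3
        · exact h3
        · exact absurd h3 hx2
      exact ⟨h.trans (Finset.union_subset_union hT (le_refl _)), h2⟩
    · intro ⟨h1, h2⟩
      intro x hx
      by_cases hr : x ∈ R
      · exact Finset.mem_union_right _ hr
      · exact Finset.mem_union_left _ (h2 (Finset.mem_sdiff.mpr ⟨hx, hr⟩))
  rw [Finset.sum_congr rfl (fun T hT => by rw [hinner T hT, Finset.mul_sum])]
  rw [Finset.sum_comm]
  have hmid : ∀ S' ∈ (S ∪ R).powerset,
      (∑ T ∈ S.powerset, (-1:ℝ) ^ ((S \ T).card) * (if S' \ R ⊆ T then c S' else 0))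
        = (if S' \ R = S then 1 else 0) * c S' := by
    intro S' hS'
    rw [Finset.mem_powerset] at hS'
    have hsub : S' \ R ⊆ S := by
      intro x hx
      rcases Finset.mem_sdiff.mp hx with ⟨hx1, hx2⟩
      rcases Finset.mem_union.mp (hS' hx1) with h3 | h3
      · exact h3
      · exact absurd h3 hx2
    have : ∀ T ∈ S.powerset, (-1:ℝ) ^ ((S \ T).card) * (if S' \ R ⊆ T then c S' else 0)
        = (if S' \ R ⊆ T then (-1:ℝ) ^ ((S \ T).card) * c S' else 0) := by
      intro T _
      by_cases h : S' \ R ⊆ T <;> simp [h]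
    rw [Finset.sum_congr rfl this, ← Finset.sum_filter, ← Finset.sum_mul, altsum _ _ hsub]
  rw [Finset.sum_congr rfl hmid]
  have : ∀ S' ∈ (S ∪ R).powerset, (if S' \ R = S then (1:ℝ) else 0) * c S'
      = (if S' \ R = S then c S' else 0) := by
    intro S' _; by_cases h : S' \ R = S <;> simp [h]
  rw [Finset.sum_congr rfl this, ← Finset.sum_filter]
  refine Finset.sum_bij' (i := fun S' _ => S' ∩ R) (j := fun U _ => S ∪ U)
    ?_ ?_ ?_ ?_ ?_
  · intro S' hS'
    simp only [Finset.mem_filter, Finset.mem_powerset] at hS' ⊢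
    exact Finset.inter_subset_right
  · intro U hU
    simp only [Finset.mem_filter, Finset.mem_powerset] at hU ⊢
    constructor
    · exact Finset.union_subset_union (le_refl _) hU
    · ext x
      simp only [Finset.mem_sdiff, Finset.mem_union]
      constructor
      · rintro ⟨h1 | h1, h2⟩
        · exact h1
        · exact absurd (hU h1) h2
      · intro h
        exact ⟨Or.inl h, fun hr => Finset.disjoint_left.mp hd h hr⟩
  · intro S' hS'
    simp only [Finset.mem_filter, Finset.mem_powerset] at hS'
    ext x
    simp only [Finset.mem_union, Finset.mem_inter]
    constructor
    · rintro (h | ⟨h, _⟩)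
      · rw [← hS'.2] at h; exact (Finset.mem_sdiff.mp h).1
      · exact h
    · intro h
      by_cases hr : x ∈ R
      · exact Or.inr ⟨h, hr⟩
      · exact Or.inl (by rw [← hS'.2]; exact Finset.mem_sdiff.mpr ⟨h, hr⟩)
  · intro U hU
    simp only [Finset.mem_powerset] at hU
    ext x
    simp only [Finset.mem_inter, Finset.mem_union]
    constructor
    · rintro ⟨h1 | h1, h2⟩
      · exact absurd h2 (Finset.disjoint_left.mp hd h1)
      · exact h1
    · intro h; exact ⟨Or.inr h, hU h⟩
  · intro S' hS'
    simp only [Finset.mem_filter, Finset.mem_powerset] at hS'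
    congr 1
    ext x
    simp only [Finset.mem_union, Finset.mem_inter]
    constructor
    · intro h
      by_cases hr : x ∈ R
      · exact Or.inr ⟨h, hr⟩
      · exact Or.inl (by rw [← hS'.2]; exact Finset.mem_sdiff.mpr ⟨h, hr⟩)
    · rintro (h | ⟨h, _⟩)
      · rw [← hS'.2] at h; exact (Finset.mem_sdiff.mp h).1
      · exact h

end Stmt0Aux

namespace Stmt0Aux

def Wset (m n : ℕ) (y : Fin n → Bool) : Finset (Fin n × Bool × Fin m) :=
  Finset.univ.filter (fun v => v.2.1 = y v.1)

lemma mem_Wset {m n : ℕ} {y : Fin n → Bool} {v : Fin n × Bool × Fin m} :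
    v ∈ Wset m n y ↔ v.2.1 = y v.1 := by simp [Wset]

end Stmt0Aux

open Stmt0Aux in
/-- any multilinear polynomial that is nonzero on `X_1` and zero
on `X_0` has degree at least `min (n/2) (m/2) + 1`. -/
theorem stmt0 (m n : ℕ) (hm : 0 < m) (hme : Even m) (hn : 0 < n) (hne : Even n)
    (p : MvPolynomial (Fin n × Bool × Fin m) ℝ) (hp : IsMultilinear p)
    (h1 : ∀ x, memX1 m n x → evalB x p ≠ 0)
    (h0 : ∀ x, memX0 m n x → evalB x p = 0) :
    min (n / 2) (m / 2) + 1 ≤ p.totalDegree := by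
  classical
  by_contra hcon
  push_neg at hcon
  have hD : p.totalDegree ≤ min (n / 2) (m / 2) := Nat.lt_succ_iff.mp hcon
  have hDn : p.totalDegree ≤ n / 2 := le_trans hD (min_le_left _ _)
  have hDm : p.totalDegree ≤ m / 2 := le_trans hD (min_le_right _ _)
  -- Step 1 : the Möbius sums over the "on-halves" of a weight n/2 pattern vanish
  have step1 : ∀ y : Fin n → Bool, weight y = n / 2 →
      ∀ S : Finset (Fin n × Bool × Fin m), S ⊆ Wset m n y → S.card ≤ m / 2 →
      ∑ U ∈ (Wset m n y \ S).powerset, cf p (S ∪ U) = 0 := by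
    intro y hy S hSW hScard
    have hdisj : Disjoint S (Wset m n y \ S) := Finset.disjoint_sdiff
    rw [← moebius (cf p) S (Wset m n y \ S) hdisj]
    apply Finset.sum_eq_zero
    intro T hT
    rw [Finset.mem_powerset] at hT
    set A := T ∪ (Wset m n y \ S) with hA
    have hAW : A ⊆ Wset m n y :=
      Finset.union_subset (hT.trans hSW) Finset.sdiff_subset
    set x : Fin n → Bool → Fin m → Bool := fun i b j => decide ((i, b, j) ∈ A) with hx
    have hkey : evalB x p = ∑ S' ∈ A.powerset, cf p S' := by
      have h := eval_boolean hp (fun v : Fin n × Bool × Fin m => x v.1 v.2.1 v.2.2)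
      have hfilter : (Finset.univ.filter
          fun v : Fin n × Bool × Fin m => x v.1 v.2.1 v.2.2 = true) = A := by
        ext v
        simp only [Finset.mem_filter, Finset.mem_univ, true_and, hx, decide_eq_true_eq]
      rw [hfilter] at h
      exact h
    have hX0 : memX0 m n x := by
      refine ⟨y, hy, ?_⟩
      intro i
      constructor
      · intro j
        have hnot : ((i, !(y i), j) : Fin n × Bool × Fin m) ∉ A := by
          intro hmem
          have := mem_Wset.mp (hAW hmem)
          simp at this
        simp [hx, hnot]
      · -- weight lower bound
        set Sp : Finset (Fin m) :=
          Finset.univ.filter (fun j => ((i, y i, j) : Fin n × Bool × Fin m) ∈ S) with hSp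
        have hSpcard : Sp.card ≤ S.card := by
          apply Finset.card_le_card_of_injOn (fun j => ((i, y i, j) : Fin n × Bool × Fin m))
          · intro j hj
            rw [hSp] at hj
            exact (Finset.mem_filter.mp hj).2
          · intro a _ b _ hab
            simpa using congrArg (fun v : Fin n × Bool × Fin m => v.2.2) hab
        have hsub : Finset.univ \ Sp ⊆
            Finset.univ.filter (fun j => x i (y i) j = true) := by
          intro j hj
          rcases Finset.mem_sdiff.mp hj with ⟨_, hj2⟩
          have hjS : ((i, y i, j) : Fin n × Bool × Fin m) ∉ S := by
            intro hmem
            exact hj2 (by rw [hSp]; exact Finset.mem_filter.mpr ⟨Finset.mem_univ _, hmem⟩)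
          have hjW : ((i, y i, j) : Fin n × Bool × Fin m) ∈ Wset m n y :=
            mem_Wset.mpr rfl
          have hjA : ((i, y i, j) : Fin n × Bool × Fin m) ∈ A := by
            rw [hA]
            exact Finset.mem_union_right _ (Finset.mem_sdiff.mpr ⟨hjW, hjS⟩)
          simp [hx, hjA]
        have hcard2 : m - Sp.card ≤ weight (x i (y i)) := by
          have := Finset.card_le_card hsub
          rw [Finset.card_sdiff_of_subset (Finset.subset_univ _), Finset.card_univ,
            Fintype.card_fin] at this
          exact this
        have : Sp.card ≤ m / 2 := le_trans hSpcard hScard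
        omega
    have h0x := h0 x hX0
    rw [hkey] at h0x
    rw [h0x, mul_zero]
  -- Step 2 : all coefficients supported inside the on-halves of a weight n/2 pattern vanish
  have step2 : ∀ y : Fin n → Bool, weight y = n / 2 →
      ∀ (k : ℕ) (S : Finset (Fin n × Bool × Fin m)), S ⊆ Wset m n y →
      (Wset m n y \ S).card ≤ k → cf p S = 0 := by
    intro y hy k
    induction k with
    | zero =>
      intro S hSW hcard
      by_cases hbig : p.totalDegree < S.card
      · exact cf_eq_zero_of_big hbig
      · push_neg at hbig
        have h1' := step1 y hy S hSW (le_trans hbig hDm)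
        have hempty : Wset m n y \ S = ∅ :=
          Finset.card_eq_zero.mp (Nat.le_zero.mp hcard)
        rw [hempty] at h1'
        simpa using h1'
    | succ k ih =>
      intro S hSW hcard
      by_cases hbig : p.totalDegree < S.card
      · exact cf_eq_zero_of_big hbig
      · push_neg at hbig
        have h1' := step1 y hy S hSW (le_trans hbig hDm)
        rw [← Finset.add_sum_erase _ _ (Finset.empty_mem_powerset (Wset m n y \ S))] at h1'
        rw [Finset.union_empty] at h1'
        have hrest : ∀ U ∈ ((Wset m n y \ S).powerset.erase ∅), cf p (S ∪ U) = 0 := by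
          intro U hU
          rcases Finset.mem_erase.mp hU with ⟨hUne, hUp⟩
          rw [Finset.mem_powerset] at hUp
          apply ih (S ∪ U) (Finset.union_subset hSW (hUp.trans Finset.sdiff_subset))
          have hsub : Wset m n y \ (S ∪ U) ⊆ Wset m n y \ S :=
            Finset.sdiff_subset_sdiff (le_refl _) Finset.subset_union_left
          obtain ⟨u, hu⟩ := Finset.nonempty_iff_ne_empty.mpr hUne
          have hu1 : u ∈ Wset m n y \ S := hUp hu
          have hu2 : u ∉ Wset m n y \ (S ∪ U) := by
            intro hmem
            exact (Finset.mem_sdiff.mp hmem).2 (Finset.mem_union_right _ hu)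
          have hlt : (Wset m n y \ (S ∪ U)).card < (Wset m n y \ S).card :=
            Finset.card_lt_card ((Finset.ssubset_iff_of_subset hsub).mpr ⟨u, hu1, hu2⟩)
          omega
        rw [Finset.sum_eq_zero hrest, add_zero] at h1'
        exact h1'
  -- Step 3 : coefficients supported on first halves vanish
  have step3 : ∀ S : Finset (Fin n × Bool × Fin m),
      (∀ v ∈ S, v.2.1 = false) → cf p S = 0 := by
    intro S hSf
    by_cases hbig : p.totalDegree < S.card
    · exact cf_eq_zero_of_big hbig
    · push_neg at hbig
      have hcard : S.card ≤ n / 2 := le_trans hbig hDn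
      set B := S.image (fun v => v.1) with hB
      have hBcard : B.card ≤ n / 2 := le_trans Finset.card_image_le hcard
      have hcompl : n / 2 ≤ (Finset.univ \ B).card := by
        rw [Finset.card_sdiff_of_subset (Finset.subset_univ _), Finset.card_univ, Fintype.card_fin]
        omega
      obtain ⟨Y, hYsub, hYcard⟩ := Finset.exists_subset_card_eq hcompl
      set y : Fin n → Bool := fun i => decide (i ∈ Y) with hy
      have hwy : weight y = n / 2 := by
        unfold weight
        rw [← hYcard]
        congr 1
        ext i
        simp [hy]
      apply step2 y hwy ((Wset m n y \ S).card) S _ (le_refl _)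
      intro v hv
      rw [mem_Wset, hSf v hv]
      have hvB : v.1 ∈ B := by
        rw [hB]
        exact Finset.mem_image_of_mem _ hv
      have hvY : v.1 ∉ Y := fun hvy => (Finset.mem_sdiff.mp (hYsub hvy)).2 hvB
      simp [hy, hvY]
  -- Step 4 : contradiction with an explicit element of X1
  set x1 : Fin n → Bool → Fin m → Bool := fun _ b _ => !b with hx1
  have hmem1 : memX1 m n x1 := by
    intro i
    constructor
    · intro j
      simp [hx1]
    · have hone : (Finset.univ.filter (fun j : Fin m => x1 i false j = true)) =
          Finset.univ := by
        ext j
        simp [hx1]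
      unfold weight
      rw [hone, Finset.card_univ, Fintype.card_fin]
      omega
  apply h1 x1 hmem1
  have h := eval_boolean hp (fun v : Fin n × Bool × Fin m => x1 v.1 v.2.1 v.2.2)
  have hzero : ∑ S ∈ (Finset.univ.filter
      fun v : Fin n × Bool × Fin m => x1 v.1 v.2.1 v.2.2 = true).powerset, cf p S = 0 := by
    apply Finset.sum_eq_zero
    intro S hS
    apply step3
    intro v hv
    have hmem := Finset.mem_powerset.mp hS hv
    simp only [Finset.mem_filter, hx1] at hmem
    simpa using hmem.2
  rw [hzero] at h
  exact h
end

section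
/- There exists a multilinear real polynomial p in the 2mn variables of degree n/2 + 1 such that p(x) = 0 for all x ∈ X_0 and p(x) > 0 for all x ∈ X_1. (Concretely, one may take p to be the sum, over all sets T consisting of n/2 + 1 variables each taken from the first half x^{(0,i)} of a different block i, of the product of the variables in T.) -/
open MvPolynomial Finset

/-- exponent vector of the monomial determined by `f`. -/
noncomputable def expo (m n : ℕ) (f : Fin n → Option (Fin m)) :
    (Fin n × Bool × Fin m) →₀ ℕ :=
  Finsupp.equivFunOnFinite.symm
    (fun v => if v.2.1 = false ∧ f v.1 = some v.2.2 then 1 else 0)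

lemma expo_apply (m n : ℕ) (f : Fin n → Option (Fin m)) (v) :
    expo m n f v = if v.2.1 = false ∧ f v.1 = some v.2.2 then 1 else 0 := rfl

lemma expo_inj (m n : ℕ) : Function.Injective (expo m n) := by
  intro f g h
  funext i
  have key : ∀ j, (f i = some j) ↔ (g i = some j) := by
    intro j
    have := congrFun (congrArg (fun (s : (Fin n × Bool × Fin m) →₀ ℕ) => ⇑s) h) (i, false, j)
    simp only [expo_apply] at this
    constructor <;> intro hh <;> by_contra hc <;> simp [hh, hc] at this
  cases hf : f i with
  | none =>
    cases hg : g i with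
    | none => rfl
    | some j => exact absurd ((key j).mpr hg) (by simp [hf])
  | some j => exact ((key j).mp hf).symm

lemma deg_expo (m n : ℕ) (f : Fin n → Option (Fin m)) :
    ((expo m n f).sum fun _ e => e) = (univ.filter fun i => (f i).isSome).card := by
  rw [Finsupp.sum_fintype _ _ (fun _ => rfl)]
  rw [Fintype.sum_prod_type]
  have : ∀ i : Fin n, (∑ v : Bool × Fin m, expo m n f (i, v)) =
      if (f i).isSome then 1 else 0 := by
    intro i
    rw [Fintype.sum_prod_type]
    simp only [expo_apply]
    rcases Option.eq_none_or_eq_some (f i) with hf | ⟨j, hf⟩ <;>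
      simp only [hf] <;> simp [Finset.sum_ite_eq, Finset.filter_eq]
  simp only [this]
  rw [Finset.card_filter]

lemma card_filter_lt (n k : ℕ) (hk : k ≤ n) :
    (univ.filter fun i : Fin n => (i : ℕ) < k).card = k := by
  have : (univ.filter fun i : Fin n => (i : ℕ) < k) =
      Finset.map (Fin.castLEEmb hk) univ := by
    ext a
    simp only [mem_filter, mem_univ, true_and, Finset.mem_map]
    constructor
    · intro ha; exact ⟨⟨a, ha⟩, rfl⟩
    · rintro ⟨b, -, rfl⟩; exact b.isLt
  rw [this]; simp

noncomputable def thePoly (m n : ℕ) : MvPolynomial (Fin n × Bool × Fin m) ℝ :=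
  ∑ f ∈ ((univ : Finset (Fin n → Option (Fin m))).filter
      (fun f => (univ.filter fun i => (f i).isSome).card = n / 2 + 1)),
    monomial (expo m n f) 1

lemma eval_mono (m n : ℕ) (f : Fin n → Option (Fin m)) (c : Fin n × Bool × Fin m → ℝ) :
    eval c (monomial (expo m n f) (1:ℝ)) =
    ∏ v : Fin n × Bool × Fin m,
      if v.2.1 = false ∧ f v.1 = some v.2.2 then c v else 1 := by
  rw [eval_monomial, one_mul, Finsupp.prod_fintype _ _ (fun _ => pow_zero _)]
  refine Finset.prod_congr rfl fun v _ => ?_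
  rw [expo_apply]
  split <;> simp

lemma card_some (m n k : ℕ) (hk : k ≤ n) (g : Fin n → Fin m) :
    (univ.filter fun i : Fin n => (if (i:ℕ) < k then some (g i) else none).isSome).card = k := by
  have h : (univ.filter fun i : Fin n => (if (i:ℕ) < k then some (g i) else none).isSome)
      = univ.filter fun i : Fin n => (i:ℕ) < k := by
    apply Finset.filter_congr
    intro i _
    by_cases h : (i:ℕ) < k <;> simp [h]
  rw [h, card_filter_lt n k hk]

/-- there is a multilinear polynomial of degree `n/2 + 1` that is
zero on `X_0` and positive on `X_1`. -/
theorem stmt1 (m n : ℕ) (hm : 0 < m) (hme : Even m) (hn : 0 < n) (hne : Even n) :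
    ∃ p : MvPolynomial (Fin n × Bool × Fin m) ℝ, IsMultilinear p ∧
      p.totalDegree = n / 2 + 1 ∧
      (∀ x, memX0 m n x → evalB x p = 0) ∧
      (∀ x, memX1 m n x → 0 < evalB x p) := by
  have hn2 : n % 2 = 0 := Nat.even_iff.mp hne
  have hm2 : m % 2 = 0 := Nat.even_iff.mp hme
  set k := n / 2 + 1 with hk
  have hkn : k ≤ n := by
    have : n / 2 < n := Nat.div_lt_self hn (by norm_num)
    omega
  set D := ((univ : Finset (Fin n → Option (Fin m))).filter
      (fun f => (univ.filter fun i => (f i).isSome).card = k)) with hD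
  refine ⟨∑ f ∈ D, monomial (expo m n f) 1, ?_, ?_, ?_, ?_⟩
  · -- multilinear
    intro s hs v
    obtain ⟨f, hf, hs'⟩ := Finset.mem_biUnion.mp (MvPolynomial.support_sum hs)
    rw [support_monomial, if_neg one_ne_zero, Finset.mem_singleton] at hs'
    subst hs'
    rw [expo_apply]
    split <;> norm_num
  · -- total degree
    apply le_antisymm
    · refine (totalDegree_finset_sum _ _).trans ?_
      apply Finset.sup_le
      intro f hf
      rw [totalDegree_monomial _ one_ne_zero, deg_expo]
      exact le_of_eq (mem_filter.mp hf).2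
    · set f1 : Fin n → Option (Fin m) := fun i => if (i:ℕ) < k then some ⟨0, hm⟩ else none
        with hf1
      have hf1D : f1 ∈ D := by
        rw [hD, mem_filter]
        exact ⟨mem_univ _, card_some m n k hkn _⟩
      have hcoeff : coeff (expo m n f1) (∑ f ∈ D, monomial (expo m n f) (1:ℝ)) = 1 := by
        rw [MvPolynomial.coeff_sum, Finset.sum_eq_single f1]
        · simp [coeff_monomial]
        · intro g _ hne'
          rw [coeff_monomial, if_neg]
          exact fun he => hne' (expo_inj m n he)
        · intro h; exact absurd hf1D h
      have hmem : expo m n f1 ∈ (∑ f ∈ D, monomial (expo m n f) (1:ℝ)).support := by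
        rw [mem_support_iff, hcoeff]; norm_num
      have hle := le_totalDegree hmem
      rwa [deg_expo, card_some m n k hkn] at hle
  · -- zero on X0
    rintro x ⟨y, hy, hA⟩
    rw [evalB, map_sum]
    apply Finset.sum_eq_zero
    intro f hf
    rw [eval_mono]
    have hcard : (univ.filter fun i => (f i).isSome).card = k := (mem_filter.mp hf).2
    have hex : ∃ i0 ∈ univ.filter (fun i => (f i).isSome), y i0 = true := by
      by_contra hcon
      push_neg at hcon
      have hsub : (univ.filter fun i => (f i).isSome) ⊆
          (univ.filter fun i : Fin n => y i = false) := by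
        intro i hi
        rw [mem_filter]
        refine ⟨mem_univ _, ?_⟩
        have := hcon i hi
        simpa using this
      have h1 := Finset.card_le_card hsub
      have h2 : (univ.filter fun i : Fin n => y i = true).card
          + (univ.filter fun i : Fin n => y i = false).card = n := by
        have := Finset.card_filter_add_card_filter_not
          (s := (univ : Finset (Fin n))) (p := fun i => y i = true)
        simp only [Finset.card_univ, Fintype.card_fin] at this
        have heq : ((univ : Finset (Fin n)).filter fun i => ¬ y i = true)
            = (univ.filter fun i : Fin n => y i = false) := by
          apply Finset.filter_congr
          intro i _
          cases y i <;> simp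
        rw [heq] at this
        exact this
      have h3 : weight y = n / 2 := hy
      rw [weight] at h3
      rw [hcard] at h1
      omega
    obtain ⟨i0, hi0, hy0⟩ := hex
    obtain ⟨j0, hj0⟩ := Option.isSome_iff_exists.mp (by simpa using (mem_filter.mp hi0).2)
    apply Finset.prod_eq_zero (mem_univ ((i0, false, j0) : Fin n × Bool × Fin m))
    rw [if_pos ⟨rfl, hj0⟩]
    have hz := (hA i0).1
    rw [hy0] at hz
    have hx : x i0 false j0 = false := by simpa using hz j0
    simp [b2r, hx]
  · -- positive on X1
    intro x hx1
    rw [evalB, map_sum]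
    have hone : 1 ≤ m / 2 := by omega
    have hj : ∀ i : Fin n, ∃ j, x i false j = true := by
      intro i
      have hpos : 0 < weight (x i false) := lt_of_lt_of_le hone (hx1 i).2
      rw [weight, Finset.card_pos] at hpos
      obtain ⟨j, hjm⟩ := hpos
      exact ⟨j, (mem_filter.mp hjm).2⟩
    choose jj hjj using hj
    set f0 : Fin n → Option (Fin m) := fun i => if (i:ℕ) < k then some (jj i) else none
      with hf0
    have hf0D : f0 ∈ D := by
      rw [hD, mem_filter]
      exact ⟨mem_univ _, card_some m n k hkn _⟩
    apply Finset.sum_pos'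
    · intro f _
      rw [eval_mono]
      apply Finset.prod_nonneg
      intro v _
      split
      · cases x v.1 v.2.1 v.2.2 <;> simp [b2r]
      · norm_num
    · refine ⟨f0, hf0D, ?_⟩
      rw [eval_mono]
      have hall : ∀ v : Fin n × Bool × Fin m,
          (if v.2.1 = false ∧ f0 v.1 = some v.2.2
            then b2r (x v.1 v.2.1 v.2.2) else 1) = 1 := by
        rintro ⟨i, b, j⟩
        split
        · next h =>
          obtain ⟨hb, hfi⟩ := h
          by_cases hik : (i:ℕ) < k
          · rw [hf0] at hfi
            simp only [if_pos hik, Option.some.injEq] at hfi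
            subst hfi
            subst hb
            simp [b2r, hjj i]
          · rw [hf0] at hfi
            simp [if_neg hik] at hfi
        · rfl
      rw [Finset.prod_congr rfl (fun v _ => hall v), Finset.prod_const_one]
      norm_num
end

section
/- There exists a multilinear real polynomial p in the 2mn variables of degree m/2 + 1 such that p(x) = 0 for all x ∈ X_0 and p(x) = n/2 for all x ∈ X_1. (Concretely, letting q_i be the multilinear polynomial computing the OR of the first m/2 + 1 bits of x^{(1,i)}, one may take p = n/2 − (q_1 + … + q_n).) -/
open MvPolynomial Finset

noncomputable def dd {m n : ℕ} (i : Fin n) (T : Finset (Fin m)) :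
    (Fin n × Bool × Fin m) →₀ ℕ :=
  Finsupp.equivFunOnFinite.symm fun v => if v.1 = i ∧ v.2.1 = true ∧ v.2.2 ∈ T then 1 else 0

lemma dd_apply {m n : ℕ} (i : Fin n) (T : Finset (Fin m)) (v) :
    dd i T v = if v.1 = i ∧ v.2.1 = true ∧ v.2.2 ∈ T then 1 else 0 := rfl

lemma dd_degree {m n : ℕ} (i : Fin n) (T : Finset (Fin m)) :
    ((dd i T).sum fun _ e => e) = T.card := by
  rw [Finsupp.sum_fintype _ _ (fun _ => rfl)]
  simp only [dd_apply]
  rw [Fintype.sum_prod_type, Finset.sum_eq_single i]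
  · simp only [true_and, eq_self_iff_true]
    rw [Fintype.sum_prod_type]
    simp [Finset.sum_ite_mem]
  · intro b _ hb; simp [hb]
  · simp

lemma dd_eval {m n : ℕ} (i : Fin n) (T : Finset (Fin m)) (f : Fin n × Bool × Fin m → ℝ) :
    ((dd i T).prod fun v e => f v ^ e) = ∏ j ∈ T, f (i, true, j) := by
  rw [Finsupp.prod_fintype _ _ (fun _ => pow_zero _)]
  simp only [dd_apply, pow_ite, pow_one, pow_zero]
  rw [Fintype.prod_prod_type, Finset.prod_eq_single i]
  · simp only [true_and, eq_self_iff_true]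
    rw [Fintype.prod_prod_type]
    simp [Finset.prod_ite_mem]
  · intro b _ hb; simp [hb]
  · simp

lemma dd_inj {m n : ℕ} {i i' : Fin n} {T T' : Finset (Fin m)}
    (h : dd i T = dd i' T') (hT : T.Nonempty) : i = i' ∧ T = T' := by
  obtain ⟨j0, hj0⟩ := hT
  have hii : i = i' := by
    have := DFunLike.congr_fun h (i, true, j0)
    rw [dd_apply, dd_apply] at this
    by_contra hne
    simp [hj0, hne, fun hh : i = i' => hne hh] at this
  refine ⟨hii, ?_⟩
  ext j
  have := DFunLike.congr_fun h (i, true, j)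
  rw [dd_apply, dd_apply] at this
  simp [hii] at this ⊢
  constructor
  · intro hj; by_contra hj'; simp [hj, hj'] at this
  · intro hj; by_contra hj'; simp [hj, hj'] at this

lemma sum_powerset_prod {m : ℕ} (S : Finset (Fin m)) (a : Fin m → ℝ) :
    ∑ T ∈ S.powerset, (-1 : ℝ) ^ T.card * ∏ j ∈ T, a j = ∏ j ∈ S, (1 - a j) := by
  induction S using Finset.induction_on with
  | empty => simp
  | @insert x s hx ih =>
    rw [Finset.sum_powerset_insert hx, Finset.prod_insert hx, ← ih]
    have : ∀ T ∈ s.powerset, (-1 : ℝ) ^ (insert x T).card * ∏ j ∈ insert x T, a j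
        = -a x * ((-1 : ℝ) ^ T.card * ∏ j ∈ T, a j) := by
      intro T hT
      have hxT : x ∉ T := fun hxT => hx (Finset.mem_powerset.mp hT hxT)
      rw [Finset.card_insert_of_notMem hxT, Finset.prod_insert hxT]
      ring
    rw [Finset.sum_congr rfl this, ← Finset.mul_sum]
    ring

/-- there is a multilinear polynomial of degree `m/2 + 1` that is
zero on `X_0` and equal to `n/2` on `X_1`. -/
theorem stmt2 (m n : ℕ) (hm : 0 < m) (hme : Even m) (hn : 0 < n) (hne : Even n) :
    ∃ p : MvPolynomial (Fin n × Bool × Fin m) ℝ, IsMultilinear p ∧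
      p.totalDegree = m / 2 + 1 ∧
      (∀ x, memX0 m n x → evalB x p = 0) ∧
      (∀ x, memX1 m n x → evalB x p = (n : ℝ) / 2) := by
  classical
  set k := m / 2 + 1 with hkdef
  have hkm : k ≤ m := by
    have := Nat.div_lt_self hm (by norm_num : 1 < 2)
    omega
  set S : Finset (Fin m) := univ.filter (fun j : Fin m => (j : ℕ) < k) with hSdef
  have hmemS : ∀ j : Fin m, j ∈ S ↔ (j : ℕ) < k := by
    intro j; simp [hSdef]
  have hcardS : S.card = k := by
    have h : ∀ a ∈ Finset.range k, a < m := fun a ha =>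
      lt_of_lt_of_le (Finset.mem_range.mp ha) hkm
    have : S = (Finset.range k).attachFin h := by
      ext j; simp [hmemS, Finset.mem_attachFin]
    rw [this, Finset.card_attachFin, Finset.card_range]
  have hj0S : (⟨0, hm⟩ : Fin m) ∈ S := by
    rw [hmemS]; simp [hkdef]
  set p : MvPolynomial (Fin n × Bool × Fin m) ℝ :=
    C ((n : ℝ) / 2 - n) +
      ∑ i : Fin n, ∑ T ∈ S.powerset, monomial (dd i T) ((-1 : ℝ) ^ T.card) with hpdef
  -- support characterization
  have hsupp : ∀ s ∈ p.support, s = 0 ∨ ∃ i T, T ⊆ S ∧ s = dd i T := by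
    intro s hs
    rw [hpdef] at hs
    rcases Finset.mem_union.mp (MvPolynomial.support_add hs) with h | h
    · left
      rw [show (C ((n : ℝ) / 2 - n) : MvPolynomial (Fin n × Bool × Fin m) ℝ)
            = monomial 0 ((n : ℝ) / 2 - n) from rfl] at h
      simpa using MvPolynomial.support_monomial_subset h
    · right
      obtain ⟨i, _, h2⟩ := Finset.mem_biUnion.mp (MvPolynomial.support_sum h)
      obtain ⟨T, hT, h3⟩ := Finset.mem_biUnion.mp (MvPolynomial.support_sum h2)
      exact ⟨i, T, Finset.mem_powerset.mp hT,
        by simpa using MvPolynomial.support_monomial_subset h3⟩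
  refine ⟨p, ?_, ?_, ?_, ?_⟩
  · -- multilinear
    intro s hs v
    rcases hsupp s hs with rfl | ⟨i, T, _, rfl⟩
    · simp
    · rw [dd_apply]; split <;> simp
  · -- total degree
    apply Nat.le_antisymm
    · rw [MvPolynomial.totalDegree]
      apply Finset.sup_le
      intro s hs
      rcases hsupp s hs with rfl | ⟨i, T, hTS, rfl⟩
      · simp
      · rw [dd_degree]
        exact le_trans (Finset.card_le_card hTS) (le_of_eq hcardS)
    · -- lower bound via the coefficient of dd i0 S
      set i0 : Fin n := ⟨0, hn⟩
      have hSne : S.Nonempty := ⟨_, hj0S⟩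
      have hddne : dd i0 S ≠ 0 := by
        intro h0
        have := DFunLike.congr_fun h0 (i0, true, (⟨0, hm⟩ : Fin m))
        rw [dd_apply] at this
        simp [hj0S] at this
      have hcoeff : MvPolynomial.coeff (dd i0 S) p = (-1 : ℝ) ^ S.card := by
        rw [hpdef, MvPolynomial.coeff_add, MvPolynomial.coeff_C, if_neg (fun h => hddne h.symm),
          MvPolynomial.coeff_sum]
        rw [Finset.sum_eq_single i0]
        · rw [MvPolynomial.coeff_sum, Finset.sum_eq_single S]
          · rw [MvPolynomial.coeff_monomial, if_pos rfl]; ring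
          · intro T hT hTne
            rw [MvPolynomial.coeff_monomial, if_neg]
            intro h
            exact hTne ((dd_inj h.symm hSne).2).symm
          · intro h; exact absurd (Finset.mem_powerset_self S) h
        · intro i _ hi
          rw [MvPolynomial.coeff_sum]
          apply Finset.sum_eq_zero
          intro T hT
          rw [MvPolynomial.coeff_monomial, if_neg]
          intro h
          exact hi ((dd_inj h.symm hSne).1).symm
        · simp
      have hmem : dd i0 S ∈ p.support := by
        rw [MvPolynomial.mem_support_iff, hcoeff]
        positivity
      have := MvPolynomial.le_totalDegree hmem
      rwa [dd_degree, hcardS] at this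
  · -- zero on X0
    intro x hx
    obtain ⟨y, hy, hmemA⟩ := hx
    have heval : evalB x p = (n : ℝ) / 2 - n +
        ∑ i : Fin n, ∏ j ∈ S, (1 - b2r (x i true j)) := by
      rw [hpdef]
      unfold evalB
      rw [map_add, eval_C, map_sum]
      congr 1
      refine Finset.sum_congr rfl fun i _ => ?_
      rw [map_sum]
      rw [← sum_powerset_prod S (fun j => b2r (x i true j))]
      refine Finset.sum_congr rfl fun T _ => ?_
      rw [MvPolynomial.eval_monomial, dd_eval]
    have hkey : ∀ i : Fin n, (∏ j ∈ S, (1 - b2r (x i true j)))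
        = if y i = true then 0 else 1 := by
      intro i
      rcases hyi : y i with _ | _
      · have h := (hmemA i).1
        rw [hyi] at h
        simp only [if_neg Bool.false_ne_true]
        apply Finset.prod_eq_one
        intro j _
        rw [show (!false) = true from rfl] at h
        rw [h j]
        simp [b2r]
      · simp only [if_pos rfl]
        have h := (hmemA i).2
        rw [hyi] at h
        -- some j in S has x i true j = true
        have hex : ∃ j ∈ S, x i true j = true := by
          by_contra hcon
          push_neg at hcon
          have hsubset : (univ.filter fun j : Fin m => x i true j = true) ⊆
              (univ.filter fun j : Fin m => ¬ ((j : ℕ) < k)) := by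
            intro j hj
            simp only [Finset.mem_filter, Finset.mem_univ, true_and] at hj ⊢
            intro hjk
            exact absurd hj (by simpa using hcon j ((hmemS j).mpr hjk))
          have hc1 := Finset.card_le_card hsubset
          have hc2 : (univ.filter fun j : Fin m => ¬ ((j : ℕ) < k)).card = m - k := by
            have := Finset.card_filter_add_card_filter_not
              (s := (univ : Finset (Fin m))) (p := fun j : Fin m => (j : ℕ) < k)
            rw [show (univ.filter fun j : Fin m => (j : ℕ) < k) = S from rfl, hcardS] at this
            simp only [Finset.card_univ, Fintype.card_fin] at this
            omega
          have hwle : weight (x i true) ≤ m - k := by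
            rw [← hc2]; exact hc1
          unfold weight at h hwle  -- m/2 ≤ card ≤ m - k = m - m/2 - 1
          obtain ⟨c, hc⟩ := hme
          omega
        obtain ⟨j, hjS, hjt⟩ := hex
        apply Finset.prod_eq_zero hjS
        rw [hjt]
        simp [b2r]
    rw [heval, Finset.sum_congr rfl fun i _ => hkey i]
    rw [Finset.sum_ite, Finset.sum_const, Finset.sum_const]
    have hcnt : (univ.filter fun i : Fin n => ¬ y i = true).card = n - n / 2 := by
      have := Finset.card_filter_add_card_filter_not
        (s := (univ : Finset (Fin n))) (p := fun i : Fin n => y i = true)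
      unfold weight at hy
      simp only [Finset.card_univ, Fintype.card_fin] at this
      omega
    rw [hcnt]
    obtain ⟨c, hc⟩ := hne
    have h1 : n - n / 2 = c := by omega
    have h2 : (n : ℝ) = 2 * c := by rw [hc]; push_cast; ring
    rw [h1, h2]
    simp
    ring
  · -- n/2 on X1
    intro x hx
    have heval : evalB x p = (n : ℝ) / 2 - n +
        ∑ i : Fin n, ∏ j ∈ S, (1 - b2r (x i true j)) := by
      rw [hpdef]
      unfold evalB
      rw [map_add, eval_C, map_sum]
      congr 1
      refine Finset.sum_congr rfl fun i _ => ?_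
      rw [map_sum]
      rw [← sum_powerset_prod S (fun j => b2r (x i true j))]
      refine Finset.sum_congr rfl fun T _ => ?_
      rw [MvPolynomial.eval_monomial, dd_eval]
    rw [heval]
    have hkey : ∀ i : Fin n, (∏ j ∈ S, (1 - b2r (x i true j))) = 1 := by
      intro i
      apply Finset.prod_eq_one
      intro j _
      have h := (hx i).1
      rw [show (!false) = true from rfl] at h
      rw [h j]
      simp [b2r]
    rw [Finset.sum_congr rfl fun i _ => hkey i, Finset.sum_const]
    simp only [Finset.card_univ, Fintype.card_fin, nsmul_eq_mul, mul_one]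
    ring
end

section
/- For every multilinear real polynomial p in the 2mn variables there exists a multilinear real polynomial p' with deg(p') ≤ deg(p) such that no monomial of p' with nonzero coefficient contains variables from both halves x^{(0,i)} and x^{(1,i)} of the same block i, and p'(x) = p(x) for every x ∈ X_0 ∪ X_1. -/
open MvPolynomial Finset

/-- every multilinear polynomial can be replaced, without
increasing the degree and without changing its values on `X_0 ∪ X_1`, by a
multilinear polynomial none of whose monomials mixes the two halves of a block. -/
theorem stmt5 (m n : ℕ) (hm : 0 < m) (hme : Even m) (hn : 0 < n) (hne : Even n)
    (p : MvPolynomial (Fin n × Bool × Fin m) ℝ) (hp : IsMultilinear p) :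
    ∃ p' : MvPolynomial (Fin n × Bool × Fin m) ℝ, IsMultilinear p' ∧
      p'.totalDegree ≤ p.totalDegree ∧
      (∀ s ∈ p'.support, ∀ i : Fin n,
        ¬ ((∃ j, s (i, false, j) ≠ 0) ∧ (∃ j, s (i, true, j) ≠ 0))) ∧
      (∀ x, memX0 m n x ∨ memX1 m n x → evalB x p' = evalB x p) := by
  classical
  set G : (Fin n × Bool × Fin m →₀ ℕ) → Prop := fun s =>
    ∀ i : Fin n, ¬ ((∃ j, s (i, false, j) ≠ 0) ∧ (∃ j, s (i, true, j) ≠ 0)) with hG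
  set p' : MvPolynomial (Fin n × Bool × Fin m) ℝ :=
    ∑ s ∈ p.support.filter G, monomial s (p.coeff s) with hp'
  have hcoeff : ∀ t, p'.coeff t = if t ∈ p.support.filter G then p.coeff t else 0 := by
    intro t
    rw [hp', coeff_sum]
    simp only [coeff_monomial]
    exact Finset.sum_ite_eq' _ _ _
  have hsupp : p'.support ⊆ p.support.filter G := by
    intro t ht
    rw [mem_support_iff, hcoeff] at ht
    by_contra h
    simp [h] at ht
  refine ⟨p', ?_, ?_, ?_, ?_⟩
  · intro s hs v
    exact hp s (Finset.mem_of_mem_filter s (hsupp hs)) v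
  · apply Finset.sup_le
    intro s hs
    exact le_totalDegree (Finset.mem_of_mem_filter s (hsupp hs))
  · intro s hs i
    exact (Finset.mem_filter.mp (hsupp hs)).2 i
  · intro x hx
    have hx' : ∀ i : Fin n, ∃ b : Bool, ∀ j, x i (!b) j = false := by
      rcases hx with ⟨y, _, hy⟩ | h
      · exact fun i => ⟨y i, (hy i).1⟩
      · exact fun i => ⟨false, (h i).1⟩
    set f : Fin n × Bool × Fin m → ℝ := fun v => b2r (x v.1 v.2.1 v.2.2) with hf
    have key : ∀ s ∈ p.support, ¬ G s →
        p.coeff s * ∏ v ∈ s.support, f v ^ s v = 0 := by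
      intro s _ hs
      rw [hG] at hs
      obtain ⟨i, hi⟩ := not_forall.mp hs
      obtain ⟨⟨j0, hj0⟩, ⟨j1, hj1⟩⟩ := not_not.mp hi
      obtain ⟨b, hb⟩ := hx' i
      have : ∃ v, v ∈ s.support ∧ f v = 0 := by
        cases b
        · refine ⟨(i, true, j1), ?_, ?_⟩
          · simpa [Finsupp.mem_support_iff] using hj1
          · simpa [hf, b2r] using hb j1
        · refine ⟨(i, false, j0), ?_, ?_⟩
          · simpa [Finsupp.mem_support_iff] using hj0
          · simpa [hf, b2r] using hb j0
      obtain ⟨v, hv, hv0⟩ := this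
      have : (∏ w ∈ s.support, f w ^ s w) = 0 := by
        apply Finset.prod_eq_zero hv
        rw [hv0]
        exact zero_pow (Finsupp.mem_support_iff.mp hv)
      rw [this, mul_zero]
    have e1 : evalB x p' = ∑ s ∈ p.support.filter G,
        p.coeff s * ∏ v ∈ s.support, f v ^ s v := by
      rw [evalB, hp', map_sum]
      apply Finset.sum_congr rfl
      intro s _
      rw [eval_monomial]
      rfl
    have e2 : evalB x p = ∑ s ∈ p.support,
        p.coeff s * ∏ v ∈ s.support, f v ^ s v := by
      rw [evalB, eval_eq]
    rw [e1, e2]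
    apply Finset.sum_filter_of_ne
    intro s hs hne
    by_contra h
    exact hne (key s hs h)
end

section
/- Let S be a set of at most min(n/2, m/2) of the 2mn variables such that for every block index i, S does not contain variables from both halves x^{(0,i)} and x^{(1,i)}. Then there exists an assignment of Boolean values to the variables outside S such that for every assignment of Boolean values to the variables in S, the resulting total input lies in X_0. -/
open MvPolynomial Finset

/-!
Choose a half `y i` for every block: the half that `S` touches when `S` meets the block
(there is at most one), and otherwise freely, so that exactly `n / 2` blocks get the second
half; this is possible since `S` touches at most `|S| ≤ n / 2` blocks. Fix every
variable of half `b` of block `i` to `b = y i`. Whatever `S` is assigned, the half `!y i` of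
block `i` stays zero, and at most `|S| ≤ m / 2` bits of the half `y i` can be switched off.
-/

lemma weight_decide_mem {n : ℕ} (C : Finset (Fin n)) :
    weight (fun i => decide (i ∈ C)) = C.card := by
  simp [weight]

lemma sub_card_le_weight {m : ℕ} (u : Fin m → Bool) (F : Finset (Fin m))
    (hu : ∀ j ∉ F, u j = true) : m - F.card ≤ weight u := by
  calc m - F.card = (univ \ F).card := by rw [card_univ_sdiff, Fintype.card_fin]
    _ ≤ weight u := card_le_card fun j hj => by simpa using hu j (by simpa using hj)

lemma exists_superset_disjoint_card_eq {α : Type*} [Fintype α] [DecidableEq α] {k : ℕ}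
    (P Q : Finset α) (hPQ : Disjoint P Q) (hP : P.card ≤ k) (hQ : k + Q.card ≤ Fintype.card α) :
    ∃ C : Finset α, P ⊆ C ∧ Disjoint C Q ∧ C.card = k := by
  obtain ⟨C, hPC, hCQ, hC⟩ := exists_subsuperset_card_eq (subset_compl_iff_disjoint_right.mpr hPQ)
    hP (by rw [card_compl]; omega)
  exact ⟨C, hPC, subset_compl_iff_disjoint_right.mp hCQ, hC⟩

def touchedBlocks {m n : ℕ} (S : Finset (Fin n × Bool × Fin m)) (b : Bool) : Finset (Fin n) :=
  (S.filter (·.2.1 = b)).image Prod.fst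

lemma card_touchedBlocks_add_le {m n : ℕ} (S : Finset (Fin n × Bool × Fin m)) :
    (touchedBlocks S true).card + (touchedBlocks S false).card ≤ S.card := by
  calc _ ≤ (S.filter (·.2.1 = true)).card + (S.filter (fun v => ¬ v.2.1 = true)).card := by
        simp only [touchedBlocks, Bool.not_eq_true]
        exact add_le_add card_image_le card_image_le
    _ = S.card := card_filter_add_card_filter_not _

lemma disjoint_touchedBlocks {m n : ℕ} {S : Finset (Fin n × Bool × Fin m)}
    (hS : ∀ i : Fin n, ¬ ((∃ j, (i, false, j) ∈ S) ∧ (∃ j, (i, true, j) ∈ S))) :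
    Disjoint (touchedBlocks S true) (touchedBlocks S false) := by
  simp only [disjoint_left, touchedBlocks, mem_image, mem_filter]
  rintro i ⟨⟨_, _, j⟩, ⟨hj, rfl⟩, rfl⟩ ⟨⟨_, _, j'⟩, ⟨hj', rfl⟩, rfl⟩
  exact hS _ ⟨⟨j', hj'⟩, ⟨j, hj⟩⟩

lemma mem_touchedBlocks {m n : ℕ} {S : Finset (Fin n × Bool × Fin m)} {i : Fin n} {b : Bool}
    {j : Fin m} (h : (i, b, j) ∈ S) : i ∈ touchedBlocks S b :=
  mem_image.mpr ⟨(i, b, j), mem_filter.mpr ⟨h, rfl⟩, rfl⟩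

lemma memA_override {m n : ℕ} (S : Finset (Fin n × Bool × Fin m)) (i : Fin n) (b : Bool)
    (hb : ∀ c j, (i, c, j) ∈ S → c = b) (hcard : S.card ≤ m / 2)
    (w : Fin n × Bool × Fin m → Bool) :
    memA m b (fun c j => if (i, c, j) ∈ S then w (i, c, j) else c == b) := by
  refine ⟨fun j => ?_, ?_⟩
  · have hj : (i, !b, j) ∉ S := fun h => by simpa using hb _ _ h
    simp [hj]
  · beta_reduce
    set F := univ.filter fun j => (i, b, j) ∈ S
    have hF : F.card ≤ S.card :=
      card_le_card_of_injOn (fun j => (i, b, j)) (fun j hj => (mem_filter.mp hj).2)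
        fun _ _ _ _ h => by simpa using h
    have := sub_card_le_weight (fun j => if (i, b, j) ∈ S then w (i, b, j) else b == b) F
      fun j hj => by simp_all [F]
    omega

theorem stmt6_general (m n : ℕ)
    (S : Finset (Fin n × Bool × Fin m))
    (hcard : S.card ≤ min (n / 2) (m / 2))
    (hS : ∀ i : Fin n, ¬ ((∃ j, (i, false, j) ∈ S) ∧ (∃ j, (i, true, j) ∈ S))) :
    ∃ z : Fin n × Bool × Fin m → Bool, ∀ w : Fin n × Bool × Fin m → Bool,
      memX0 m n (fun i b j => if (i, b, j) ∈ S then w (i, b, j) else z (i, b, j)) := by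
  have htouched := card_touchedBlocks_add_le S
  obtain ⟨C, hTC, hCF, hC⟩ := exists_superset_disjoint_card_eq (k := n / 2) _ _
    (disjoint_touchedBlocks hS) (by omega) (by rw [Fintype.card_fin]; omega)
  refine ⟨fun v => v.2.1 == decide (v.1 ∈ C), fun w => ⟨fun i => decide (i ∈ C),
    by rw [weight_decide_mem, hC], fun i => memA_override S i _ (fun c j h => ?_) (by omega) w⟩⟩
  cases c
  · simpa using disjoint_right.mp hCF (mem_touchedBlocks h)
  · simpa using hTC (mem_touchedBlocks h)

/-- if `S` is a set of at most `min (n/2) (m/2)` variables not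
containing variables from both halves of any block, then the variables outside
`S` can be fixed so that every assignment to the `S`-variables yields an input
in `X_0`. -/
theorem stmt6 (m n : ℕ) (hm : 0 < m) (hme : Even m) (hn : 0 < n) (hne : Even n)
    (S : Finset (Fin n × Bool × Fin m))
    (hcard : S.card ≤ min (n / 2) (m / 2))
    (hS : ∀ i : Fin n, ¬ ((∃ j, (i, false, j) ∈ S) ∧ (∃ j, (i, true, j) ∈ S))) :
    ∃ z : Fin n × Bool × Fin m → Bool, ∀ w : Fin n × Bool × Fin m → Bool,
      memX0 m n (fun i b j => if (i, b, j) ∈ S then w (i, b, j) else z (i, b, j)) :=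
  stmt6_general m n S hcard hS
end
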